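/- arXiv:1809.02283 — 3 statements merged into one kernel-verified Lean document; each statement's English description precedes it below -/
import Mathlib

section
/- HFTA Soundness (Theorem 4.1): Let Φ be a ground relational specification in which every function symbol f_1,…,f_n occurs exactly once, let G map each original function symbol to its grammar, let M map each original function symbol to its set of occurrence copies, and suppose the HFTA H is constructed by the judgment G, M ⊢ Φ ↠ H. Then for every hierarchical tree T = (V, Υ, v_r, E) accepted by H: (1) for each i, the term Υ(v_{f_i}) is a program that conforms to the grammar G(M⁻¹(f_i)); and (2) the programs Υ(v_{f_1}),…,Υ(v_{f_n}) collectively satisfy Φ, i.e. Υ(v_{f_1}),…,Υ(v_{f_n}) ⊨ Φ. -/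
namespace Relish

/-- Alphabet symbols for program and specification trees: DSL constructs,
variables `xᵢ`, constants, binary (relational/logical) operators, and negation. -/
inductive Alpha (op val bop : Type) : Type where
  | dsl : op → Alpha op val bop
  | var : ℕ → Alpha op val bop
  | cst : val → Alpha op val bop
  | lop : bop → Alpha op val bop
  | neg : Alpha op val bop

/-- Finite trees (terms) over an alphabet. -/
inductive Tree (α : Type) : Type where
  | node : α → List (Tree α) → Tree α

/-- Bottom-up finite tree automaton: states, final states, and transitions
`σ(q₁, …, qₙ) → q`. -/
structure FTA (α Q : Type) : Type where
  states : Set Q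
  finals : Set Q
  trans : Set (α × List Q × Q)

/-- A run of an FTA on a tree reaching state `q`, in which every variable leaf
`var i` is assigned the state `leaf i`. -/
inductive RunFrom {op val bop Q : Type} (A : FTA (Alpha op val bop) Q) (leaf : ℕ → Q) :
    Tree (Alpha op val bop) → Q → Prop where
  | node (a : Alpha op val bop) (ts : List (Tree (Alpha op val bop))) (qs : List Q) (q : Q) :
      (a, qs, q) ∈ A.trans →
      (∀ i : ℕ, a = Alpha.var i → q = leaf i) →
      ts.length = qs.length →
      (∀ p ∈ ts.zip qs, RunFrom A leaf p.1 p.2) →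
      RunFrom A leaf (Tree.node a ts) q

/-- Symbols labeling FTA states: grammar nonterminals, variables `xᵢ`, or the
special start/constant symbol `s₀`. -/
inductive SymT (ν : Type) : Type where
  | nt : ν → SymT ν
  | var : ℕ → SymT ν
  | start : SymT ν

/-- A context-free grammar: productions `s → σ(s₁, …, sₙ)` and a start symbol. -/
structure Grammar (op ν : Type) : Type where
  prods : Set (ν × op × List (SymT ν))
  start : ν

/-- Derivation of a tree from a grammar symbol. -/
inductive Derives {op val bop ν : Type} (G : Grammar op ν) :
    SymT ν → Tree (Alpha op val bop) → Prop where
  | var (i : ℕ) : Derives G (SymT.var i) (Tree.node (Alpha.var i) [])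
  | prod (s : ν) (o : op) (ss : List (SymT ν)) (ts : List (Tree (Alpha op val bop))) :
      (s, o, ss) ∈ G.prods →
      ss.length = ts.length →
      (∀ p ∈ ss.zip ts, Derives G p.1 p.2) →
      Derives G (SymT.nt s) (Tree.node (Alpha.dsl o) ts)

/-- A program (tree) conforms to grammar `G` if it is derivable from the start symbol. -/
def ConformsTo {op val bop ν : Type} (G : Grammar op ν) (t : Tree (Alpha op val bop)) : Prop :=
  Derives G (SymT.nt G.start) t

/-- Evaluation of a program tree under DSL semantics `sem`, binary operator
semantics `bsem`, negation semantics `nsem`, and argument assignment `args`. -/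
inductive EvalsTo {op val bop : Type} (sem : op → List val → val)
    (bsem : bop → val → val → val) (nsem : val → val) (args : ℕ → val) :
    Tree (Alpha op val bop) → val → Prop where
  | var (i : ℕ) : EvalsTo sem bsem nsem args (Tree.node (Alpha.var i) []) (args i)
  | cst (c : val) : EvalsTo sem bsem nsem args (Tree.node (Alpha.cst c) []) c
  | dsl (o : op) (ts : List (Tree (Alpha op val bop))) (cs : List val) :
      ts.length = cs.length →
      (∀ p ∈ ts.zip cs, EvalsTo sem bsem nsem args p.1 p.2) →
      EvalsTo sem bsem nsem args (Tree.node (Alpha.dsl o) ts) (sem o cs)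
  | lop (b : bop) (t₁ t₂ : Tree (Alpha op val bop)) (c₁ c₂ : val) :
      EvalsTo sem bsem nsem args t₁ c₁ →
      EvalsTo sem bsem nsem args t₂ c₂ →
      EvalsTo sem bsem nsem args (Tree.node (Alpha.lop b) [t₁, t₂]) (bsem b c₁ c₂)
  | neg (t : Tree (Alpha op val bop)) (c : val) :
      EvalsTo sem bsem nsem args t c →
      EvalsTo sem bsem nsem args (Tree.node Alpha.neg [t]) (nsem c)

/-- States of `BuildFTA(G, [Q₁, …, Qₘ])`, generated by the Input and Prod rules;
`init i` is the set of values of the i-th initial state set `Qᵢ`. -/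
inductive BStates {op val ν : Type} (G : Grammar op ν) (sem : op → List val → val)
    (arity : ℕ) (init : ℕ → Set val) : SymT ν × val → Prop where
  | input (i : ℕ) (c : val) : i < arity → c ∈ init i →
      BStates G sem arity init (SymT.var i, c)
  | prod (s : ν) (o : op) (ss : List (SymT ν)) (cs : List val) :
      (s, o, ss) ∈ G.prods →
      ss.length = cs.length →
      (∀ p ∈ ss.zip cs, BStates G sem arity init p) →
      BStates G sem arity init (SymT.nt s, sem o cs)

/-- Transitions of `BuildFTA(G, [Q₁, …, Qₘ])` (Input and Prod rules). -/
inductive BTrans {op val ν : Type} (bop : Type) (G : Grammar op ν) (sem : op → List val → val)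
    (arity : ℕ) (init : ℕ → Set val) :
    Alpha op val bop × List (SymT ν × val) × (SymT ν × val) → Prop where
  | input (i : ℕ) (c : val) : i < arity → c ∈ init i →
      BTrans bop G sem arity init (Alpha.var i, [], (SymT.var i, c))
  | prod (s : ν) (o : op) (ss : List (SymT ν)) (cs : List val) :
      (s, o, ss) ∈ G.prods →
      ss.length = cs.length →
      (∀ p ∈ ss.zip cs, BStates G sem arity init p) →
      BTrans bop G sem arity init (Alpha.dsl o, ss.zip cs, (SymT.nt s, sem o cs))

/-- The FTA produced by the `BuildFTA` procedure: final states are all states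
`q_{s₀}^c` where `s₀` is the start symbol of the grammar (Output rule). -/
def buildFTA {op val ν : Type} (bop : Type) (G : Grammar op ν) (sem : op → List val → val)
    (arity : ℕ) (init : ℕ → Set val) : FTA (Alpha op val bop) (SymT ν × val) where
  states := {q | BStates G sem arity init q}
  finals := {q | BStates G sem arity init q ∧ q.1 = SymT.nt G.start}
  trans := {t | BTrans bop G sem arity init t}

/-- Hierarchical finite tree automaton; nodes are tree positions (the root is `[]`). -/
structure HFTA (α Q : Type) : Type where
  nodes : Set (List ℕ)
  fta : List ℕ → FTA α Q
  children : List ℕ → List (List ℕ)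
  inter : Set (Q × Q)

/-- Acceptance of a hierarchical tree `T` by an HFTA `H`, witnessed by root
states `ρ` and input-state assignments `leaf`: every node's term has an
accepting run, and for every edge from `v` to its i-th child `v'`, the final
state at the root of the run on `T v'` is related by the inter-FTA transitions
to the input state used for `xᵢ` in the run on `T v`. -/
def HAcceptWith {op val bop Q : Type} (H : HFTA (Alpha op val bop) Q)
    (T : List ℕ → Tree (Alpha op val bop)) (ρ : List ℕ → Q) (leaf : List ℕ → ℕ → Q) : Prop :=
  ∀ v ∈ H.nodes,
    ρ v ∈ (H.fta v).finals ∧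
    RunFrom (H.fta v) (leaf v) (T v) (ρ v) ∧
    ∀ (i : ℕ) (v' : List ℕ), (H.children v)[i]? = some v' → (ρ v', leaf v i) ∈ H.inter

/-- A hierarchical tree is accepted by an HFTA if some witnesses exist. -/
def HAccepts {op val bop Q : Type} (H : HFTA (Alpha op val bop) Q)
    (T : List ℕ → Tree (Alpha op val bop)) : Prop :=
  ∃ ρ leaf, HAcceptWith H T ρ leaf

/-- States of the FTAs inside a constructed HFTA: a node position paired with an
FTA state `q_s^c`. -/
abbrev TQ (ν val : Type) : Type := List ℕ × SymT ν × val

def emptyFTA {α Q : Type} : FTA α Q := ⟨∅, ∅, ∅⟩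

def mapFTA {α Q Q' : Type} (g : Q → Q') (A : FTA α Q) : FTA α Q' where
  states := g '' A.states
  finals := g '' A.finals
  trans := {t | ∃ a qs q, (a, qs, q) ∈ A.trans ∧ t = (a, qs.map g, g q)}

def tagState {ν val : Type} (i : ℕ) (q : TQ ν val) : TQ ν val := (i :: q.1, q.2)

/-- The values carried by the final states of the root FTA of an HFTA. -/
def rootVals {α ν val : Type} (H : HFTA α (TQ ν val)) : Set val :=
  {c | ∃ q ∈ (H.fta []).finals, q.2.2 = c}

/-- Combine a root FTA `A` with a list of children HFTAs, adding inter-FTA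
transitions from each final state `q_s^c` of a child's root FTA to the input
state `q_{xᵢ}^c` of the root FTA. -/
def combine {α ν val : Type} (A : FTA α (SymT ν × val)) (Hs : List (HFTA α (TQ ν val))) :
    HFTA α (TQ ν val) where
  nodes := {v | v = [] ∨ ∃ i H v', Hs[i]? = some H ∧ v' ∈ H.nodes ∧ v = i :: v'}
  fta := fun v =>
    match v with
    | [] => mapFTA (fun q => (([] : List ℕ), q)) A
    | i :: v' =>
      match Hs[i]? with
      | some H => mapFTA (tagState i) (H.fta v')
      | none => emptyFTA
  children := fun v =>
    match v with
    | [] => (List.range Hs.length).map (fun i => [i])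
    | i :: v' =>
      match Hs[i]? with
      | some H => (H.children v').map (i :: ·)
      | none => []
  inter :=
    {e | ∃ i H q q', Hs[i]? = some H ∧ (q, q') ∈ H.inter ∧ e = (tagState i q, tagState i q')} ∪
    {e | ∃ i H q, Hs[i]? = some H ∧ q ∈ (H.fta []).finals ∧
        e = (tagState i q, (([] : List ℕ), (SymT.var i, q.2.2)))}

/-- FTA for a constant node (Const rule): accepts only the constant `c`. -/
def constFTA {op val ν : Type} (bop : Type) (c : val) :
    FTA (Alpha op val bop) (SymT ν × val) where
  states := {(SymT.start, c)}
  finals := {(SymT.start, c)}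
  trans := {(Alpha.cst c, [], (SymT.start, c))}

/-- FTA for a binary relational/logical operator node (Logical rule). -/
def logicFTA {op val bop ν : Type} (vtrue vfalse : val) (bsem : bop → val → val → val)
    (b : bop) (C₁ C₂ : Set val) : FTA (Alpha op val bop) (SymT ν × val) where
  states := {q | ∃ c ∈ C₁, q = (SymT.var 0, c)} ∪ {q | ∃ c ∈ C₂, q = (SymT.var 1, c)} ∪
      {(SymT.start, vtrue), (SymT.start, vfalse)}
  finals := {(SymT.start, vtrue), (SymT.start, vfalse)}
  trans := {t | ∃ c ∈ C₁, t = (Alpha.var 0, [], (SymT.var 0, c))} ∪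
      {t | ∃ c ∈ C₂, t = (Alpha.var 1, [], (SymT.var 1, c))} ∪
      {t | ∃ c₁ ∈ C₁, ∃ c₂ ∈ C₂,
          t = (Alpha.lop b, [(SymT.var 0, c₁), (SymT.var 1, c₂)], (SymT.start, bsem b c₁ c₂))}

/-- FTA for a negation node (Neg rule). -/
def negFTA {op val bop ν : Type} (vtrue vfalse : val) (nsem : val → val) (C : Set val) :
    FTA (Alpha op val bop) (SymT ν × val) where
  states := {q | ∃ c ∈ C, q = (SymT.var 0, c)} ∪ {(SymT.start, vtrue), (SymT.start, vfalse)}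
  finals := {(SymT.start, vtrue), (SymT.start, vfalse)}
  trans := {t | ∃ c ∈ C, t = (Alpha.var 0, [], (SymT.var 0, c))} ∪
      {t | ∃ c ∈ C, t = (Alpha.neg, [(SymT.var 0, c)], (SymT.start, nsem c))}

/-- Initial value sets obtained from the final states of children root FTAs. -/
def initsOf {α ν val : Type} (Hs : List (HFTA α (TQ ν val))) : ℕ → Set val :=
  fun i =>
    match Hs[i]? with
    | some H => rootVals H
    | none => ∅

/-- Ground specifications `ψ`: constants, applications of function symbols,
binary relational/logical operators, and negation.  A ground specification in
which the topmost constructor is `bin` or `neg` is a formula; one built only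
from `cst`/`app` is a term. -/
inductive GS (F val bop : Type) : Type where
  | cst : val → GS F val bop
  | app : F → List (GS F val bop) → GS F val bop
  | bin : bop → GS F val bop → GS F val bop → GS F val bop
  | neg : GS F val bop → GS F val bop

/-- `ψ` is a term (no logical structure). -/
inductive IsTerm {F val bop : Type} : GS F val bop → Prop where
  | cst (c : val) : IsTerm (GS.cst c)
  | app (f : F) (ts : List (GS F val bop)) : (∀ t ∈ ts, IsTerm t) → IsTerm (GS.app f ts)

/-- `ψ` is a formula. -/
inductive IsForm {F val bop : Type} : GS F val bop → Prop where
  | bin (b : bop) (ψ₁ ψ₂ : GS F val bop) : IsForm (GS.bin b ψ₁ ψ₂)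
  | neg (ψ : GS F val bop) : IsForm ψ → IsForm (GS.neg ψ)

/-- Function symbol `g` occurs at position `p` in a ground specification. -/
inductive OccursAt {F val bop : Type} : GS F val bop → F → List ℕ → Prop where
  | here (f : F) (ts : List (GS F val bop)) : OccursAt (GS.app f ts) f []
  | app (f g : F) (ts : List (GS F val bop)) (i : ℕ) (t : GS F val bop) (p : List ℕ) :
      ts[i]? = some t → OccursAt t g p → OccursAt (GS.app f ts) g (i :: p)
  | binl (b : bop) (ψ₁ ψ₂ : GS F val bop) (g : F) (p : List ℕ) :
      OccursAt ψ₁ g p → OccursAt (GS.bin b ψ₁ ψ₂) g (0 :: p)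
  | binr (b : bop) (ψ₁ ψ₂ : GS F val bop) (g : F) (p : List ℕ) :
      OccursAt ψ₂ g p → OccursAt (GS.bin b ψ₁ ψ₂) g (1 :: p)
  | neg (ψ : GS F val bop) (g : F) (p : List ℕ) :
      OccursAt ψ g p → OccursAt (GS.neg ψ) g (0 :: p)

/-- Every function symbol occurs (at most) once in the ground specification. -/
def OccursOnce {F val bop : Type} (Φ : GS F val bop) : Prop :=
  ∀ (g : F) (p₁ p₂ : List ℕ), OccursAt Φ g p₁ → OccursAt Φ g p₂ → p₁ = p₂

/-- Evaluation of a ground specification under an interpretation `I` assigning a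
program to every function symbol. -/
inductive SpecEval {op val bop F : Type} [Inhabited val] (sem : op → List val → val)
    (bsem : bop → val → val → val) (nsem : val → val)
    (I : F → Tree (Alpha op val bop)) : GS F val bop → val → Prop where
  | cst (c : val) : SpecEval sem bsem nsem I (GS.cst c) c
  | app (f : F) (ts : List (GS F val bop)) (cs : List val) (c : val) :
      ts.length = cs.length →
      (∀ p ∈ ts.zip cs, SpecEval sem bsem nsem I p.1 p.2) →
      EvalsTo sem bsem nsem (fun i => cs.getD i default) (I f) c →
      SpecEval sem bsem nsem I (GS.app f ts) c
  | bin (b : bop) (ψ₁ ψ₂ : GS F val bop) (c₁ c₂ : val) :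
      SpecEval sem bsem nsem I ψ₁ c₁ →
      SpecEval sem bsem nsem I ψ₂ c₂ →
      SpecEval sem bsem nsem I (GS.bin b ψ₁ ψ₂) (bsem b c₁ c₂)
  | neg (ψ : GS F val bop) (c : val) :
      SpecEval sem bsem nsem I ψ c →
      SpecEval sem bsem nsem I (GS.neg ψ) (nsem c)

/-- `I ⊨ Φ`: the ground specification evaluates to true under interpretation `I`. -/
def Satisfies {op val bop F : Type} [Inhabited val] (sem : op → List val → val)
    (bsem : bop → val → val → val) (nsem : val → val) (vtrue : val)
    (I : F → Tree (Alpha op val bop)) (Φ : GS F val bop) : Prop :=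
  SpecEval sem bsem nsem I Φ vtrue

/-- HFTA construction judgment `𝒢, ℳ ⊢ ψ ↝ ℋ` (rules Const, Func, Logical, Neg).
`gram f` is the grammar `𝒢(ℳ⁻¹(f))` associated with occurrence symbol `f`. -/
inductive BuildsH {op val bop ν F : Type} (gram : F → Grammar op ν)
    (sem : op → List val → val) (bsem : bop → val → val → val) (nsem : val → val)
    (vtrue vfalse : val) : GS F val bop → HFTA (Alpha op val bop) (TQ ν val) → Prop where
  | cst (c : val) :
      BuildsH gram sem bsem nsem vtrue vfalse (GS.cst c) (combine (constFTA bop c) [])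
  | app (f : F) (ts : List (GS F val bop)) (Hs : List (HFTA (Alpha op val bop) (TQ ν val))) :
      ts.length = Hs.length →
      (∀ p ∈ ts.zip Hs, BuildsH gram sem bsem nsem vtrue vfalse p.1 p.2) →
      BuildsH gram sem bsem nsem vtrue vfalse (GS.app f ts)
        (combine (buildFTA bop (gram f) sem ts.length (initsOf Hs)) Hs)
  | bin (b : bop) (ψ₁ ψ₂ : GS F val bop) (H₁ H₂ : HFTA (Alpha op val bop) (TQ ν val)) :
      BuildsH gram sem bsem nsem vtrue vfalse ψ₁ H₁ →
      BuildsH gram sem bsem nsem vtrue vfalse ψ₂ H₂ →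
      BuildsH gram sem bsem nsem vtrue vfalse (GS.bin b ψ₁ ψ₂)
        (combine (logicFTA vtrue vfalse bsem b (rootVals H₁) (rootVals H₂)) [H₁, H₂])
  | neg (ψ : GS F val bop) (H₁ : HFTA (Alpha op val bop) (TQ ν val)) :
      BuildsH gram sem bsem nsem vtrue vfalse ψ H₁ →
      BuildsH gram sem bsem nsem vtrue vfalse (GS.neg ψ)
        (combine (negFTA vtrue vfalse nsem (rootVals H₁)) [H₁])

/-- The Final rule: restrict the final states of the root node's FTA to `{q_{s₀}^⊤}`. -/
def finalize {α ν val : Type} (vtrue : val) (H : HFTA α (TQ ν val)) :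
    HFTA α (TQ ν val) where
  nodes := H.nodes
  fta := fun v =>
    if v = [] then
      ⟨(H.fta []).states, {q | q ∈ (H.fta []).finals ∧ q.2 = (SymT.start, vtrue)},
        (H.fta []).trans⟩
    else H.fta v
  children := H.children
  inter := H.inter


/-- The final states of `A` reachable by (accepting) runs of `A` on program `p`. -/
def reachFinals {op val bop Q : Type} (A : FTA (Alpha op val bop) Q)
    (p : Tree (Alpha op val bop)) : Set Q :=
  {q | q ∈ A.finals ∧ ∃ leaf, RunFrom A leaf p q}

/-- The `Propagate` procedure (Algorithm 3): for every node `v ∈ W` (the nodes of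
the occurrences of the function being propagated), shrink the final states of
`Ω(v)` to those reachable by runs on the program `p`, and remove every
inter-FTA transition whose source is a final state that was removed. -/
def propagate {op val bop Q : Type} (H : HFTA (Alpha op val bop) Q)
    (p : Tree (Alpha op val bop)) (W : Set (List ℕ)) : HFTA (Alpha op val bop) Q where
  nodes := H.nodes
  fta := fun v =>
    ⟨(H.fta v).states,
      {q | q ∈ (H.fta v).finals ∧ (v ∈ W → q ∈ reachFinals (H.fta v) p)},
      (H.fta v).trans⟩
  children := H.children
  inter := {e | e ∈ H.inter ∧
      ∀ v ∈ W, e.1 ∈ (H.fta v).finals → e.1 ∈ reachFinals (H.fta v) p}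

/-- Relaxation of a ground specification: each occurrence of a function symbol
of `Φ` is replaced by a fresh occurrence symbol; `Mi` maps each occurrence
symbol back to the original symbol (i.e. `Mi = ℳ⁻¹`). -/
inductive Relax {F F₀ val bop : Type} (Mi : F → F₀) :
    GS F₀ val bop → GS F val bop → Prop where
  | cst (c : val) : Relax Mi (GS.cst c) (GS.cst c)
  | app (f : F₀) (f' : F) (ts : List (GS F₀ val bop)) (ts' : List (GS F val bop)) :
      Mi f' = f →
      ts.length = ts'.length →
      (∀ p ∈ ts.zip ts', Relax Mi p.1 p.2) →
      Relax Mi (GS.app f ts) (GS.app f' ts')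
  | bin (b : bop) (ψ₁ ψ₂ : GS F₀ val bop) (ψ₁' ψ₂' : GS F val bop) :
      Relax Mi ψ₁ ψ₁' → Relax Mi ψ₂ ψ₂' →
      Relax Mi (GS.bin b ψ₁ ψ₂) (GS.bin b ψ₁' ψ₂')
  | neg (ψ : GS F₀ val bop) (ψ' : GS F val bop) :
      Relax Mi ψ ψ' → Relax Mi (GS.neg ψ) (GS.neg ψ')

/-- Returning traces of the backtracking procedure `FindProgs` (Algorithm 2).
`occNodes f` is the set of HFTA nodes of the occurrences of the original
function symbol `f`.  `FPRet occNodes H P R` holds iff `FindProgs(H, P, ℳ)` can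
return the total assignment `R`: either all symbols are assigned, or some
unassigned symbol `f` gets a program `p` read off (at the node of one of its
occurrences) from a hierarchical tree accepted by the current HFTA such that
propagating `p` yields an HFTA with non-empty language, and the recursive call
returns `R`. -/
inductive FPRet {op val bop Q F₀ : Type} [DecidableEq F₀]
    (occNodes : F₀ → Set (List ℕ)) :
    HFTA (Alpha op val bop) Q → (F₀ → Option (Tree (Alpha op val bop))) →
    (F₀ → Tree (Alpha op val bop)) → Prop where
  | done (H : HFTA (Alpha op val bop) Q) (P : F₀ → Option (Tree (Alpha op val bop)))
      (R : F₀ → Tree (Alpha op val bop)) :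
      (∀ f, P f = some (R f)) → FPRet occNodes H P R
  | step (H : HFTA (Alpha op val bop) Q) (P : F₀ → Option (Tree (Alpha op val bop)))
      (R : F₀ → Tree (Alpha op val bop)) (f : F₀) (v : List ℕ)
      (p : Tree (Alpha op val bop)) (T : List ℕ → Tree (Alpha op val bop)) :
      P f = none →
      v ∈ occNodes f →
      HAccepts H T →
      T v = p →
      (∃ T', HAccepts (propagate H p (occNodes f)) T') →
      FPRet occNodes (propagate H p (occNodes f)) (Function.update P f (some p)) R →
      FPRet occNodes H P R

/-- The inductive synthesis phase of Algorithm 1 (lines 8--11): relax the ground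
specification `Φ`, build the HFTA for the relaxed specification (rules
Const/Func/Logical/Neg followed by the Final rule), and run `FindProgs` on it
starting from the everywhere-unassigned map, obtaining programs `R`. -/
def InductiveSynth {op val bop ν F₀ : Type} [Inhabited val] [DecidableEq F₀]
    (G : F₀ → Grammar op ν) (sem : op → List val → val) (bsem : bop → val → val → val)
    (nsem : val → val) (vtrue vfalse : val)
    (Φ : GS F₀ val bop) (R : F₀ → Tree (Alpha op val bop)) : Prop :=
  ∃ (F : Type) (Mi : F → F₀) (Φ' : GS F val bop) (H' : HFTA (Alpha op val bop) (TQ ν val)),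
    Relax Mi Φ Φ' ∧ OccursOnce Φ' ∧
    BuildsH (fun f' => G (Mi f')) sem bsem nsem vtrue vfalse Φ' H' ∧
    FPRet (fun f => {v | ∃ f' : F, Mi f' = f ∧ OccursAt Φ' f' v})
      (finalize vtrue H') (fun _ => none) R

/-- Returning traces of the CEGIS loop `Synthesize` (Algorithm 1).
`SynthRet … P Φ R` holds iff, starting from candidate programs `P` and
accumulated ground specification `Φ`, the loop can return the programs `R`:
either the current candidates verify against the relational specification `Ψ`,
or a new relational counterexample `Ψ σ` (an instantiation of the universal
quantifiers of `Ψ` violated by `P`) is conjoined to `Φ` and inductive synthesis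
produces new candidates. -/
inductive SynthRet {op val bop ν F₀ : Type} [Inhabited val] [DecidableEq F₀]
    (G : F₀ → Grammar op ν) (sem : op → List val → val) (bsem : bop → val → val → val)
    (nsem : val → val) (vtrue vfalse : val) (andOp : bop)
    (Ψ : (ℕ → val) → GS F₀ val bop)
    (verify : (F₀ → Tree (Alpha op val bop)) → Prop) :
    (F₀ → Tree (Alpha op val bop)) → GS F₀ val bop → (F₀ → Tree (Alpha op val bop)) → Prop where
  | verified (P : F₀ → Tree (Alpha op val bop)) (Φ : GS F₀ val bop) :
      verify P →
      SynthRet G sem bsem nsem vtrue vfalse andOp Ψ verify P Φ P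
  | refine (P P' R : F₀ → Tree (Alpha op val bop)) (Φ : GS F₀ val bop) (σ : ℕ → val) :
      ¬ verify P →
      ¬ Satisfies sem bsem nsem vtrue P (Ψ σ) →
      InductiveSynth G sem bsem nsem vtrue vfalse (GS.bin andOp Φ (Ψ σ)) P' →
      SynthRet G sem bsem nsem vtrue vfalse andOp Ψ verify P' (GS.bin andOp Φ (Ψ σ)) R →
      SynthRet G sem bsem nsem vtrue vfalse andOp Ψ verify P Φ R



/-! ### Auxiliary definitions and lemmas for HFTA soundness -/

section Sound

variable {op val bop ν : Type}

/-- Remove the head tag from an HFTA state. -/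
def untag {ν val : Type} (q : TQ ν val) : TQ ν val := (q.1.tail, q.2)

@[simp] lemma untag_tag {ν val : Type} (i : ℕ) (q : TQ ν val) :
    untag (tagState i q) = q := rfl

lemma tag_inj {ν val : Type} (i : ℕ) : Function.Injective (tagState i (ν := ν) (val := val)) := by
  intro a b h
  have h1 : (tagState i a).1 = (tagState i b).1 := by rw [h]
  have h2 : (tagState i a).2 = (tagState i b).2 := by rw [h]
  simp [tagState] at h1 h2
  exact Prod.ext h1 h2

lemma tag_of_head {ν val : Type} {i : ℕ} {q : TQ ν val} (h : q.1.head? = some i) :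
    tagState i (untag q) = q := by
  cases q with
  | mk l x =>
    cases l with
    | nil => simp at h
    | cons a l => simp at h; simp [tagState, untag, h]

/-- Runs only depend on the transition relation. -/
lemma run_congr {Q : Type} {A B : FTA (Alpha op val bop) Q} (h : A.trans = B.trans)
    {L : ℕ → Q} {t : Tree (Alpha op val bop)} {q : Q} (hr : RunFrom A L t q) :
    RunFrom B L t q := by
  induction hr with
  | node a ts qs q htr hvar hlen hch ih =>
    exact RunFrom.node a ts qs q (h ▸ htr) hvar hlen ih

lemma zip_mem {α β : Type _} {l : List α} {l' : List β} {k : ℕ}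
    (h1 : k < l.length) (h2 : k < l'.length) : (l[k], l'[k]) ∈ l.zip l' := by
  have h : k < (l.zip l').length := by simp [List.length_zip]; omega
  have := List.getElem_mem h
  rwa [List.getElem_zip] at this

lemma mem_zip_ex {α β : Type _} {l : List α} {l' : List β} {p : α × β}
    (hp : p ∈ l.zip l') :
    ∃ (k : ℕ) (h1 : k < l.length) (h2 : k < l'.length), p = (l[k], l'[k]) := by
  rw [List.mem_iff_getElem] at hp
  obtain ⟨k, hk, hkeq⟩ := hp
  have h1 : k < l.length := lt_of_lt_of_le hk (by simp [List.length_zip])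
  have h2 : k < l'.length := lt_of_lt_of_le hk (by simp [List.length_zip])
  exact ⟨k, h1, h2, by rw [← hkeq, List.getElem_zip]⟩

/-- Pull a run back through `mapFTA`. -/
lemma run_map_inv {Q Q' : Type} {g : Q → Q'} (hg : Function.Injective g)
    {A : FTA (Alpha op val bop) Q} {L' : ℕ → Q'} {L : ℕ → Q}
    (hL : ∀ i x, L' i = g x → L i = x) :
    ∀ {t : Tree (Alpha op val bop)} {q' : Q'},
      RunFrom (mapFTA g A) L' t q' → ∃ q, q' = g q ∧ RunFrom A L t q := by
  intro t q'' hr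
  induction hr with
  | node a ts qs' q' htr hvar hlen hch ih =>
    obtain ⟨a0, qs, q, htr0, heq⟩ := htr
    rw [Prod.mk.injEq, Prod.mk.injEq] at heq
    obtain ⟨rfl, rfl, rfl⟩ := heq
    refine ⟨q, rfl, RunFrom.node _ ts qs q htr0 ?_ ?_ ?_⟩
    · intro i hai
      exact (hL i q (hvar i hai).symm).symm
    · simpa using hlen
    · intro p hp
      obtain ⟨k, hk1, hk2, rfl⟩ := mem_zip_ex hp
      have hk2' : k < (qs.map g).length := by simpa using hk2
      have := ih (ts[k], (qs.map g)[k]) (zip_mem hk1 hk2')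
      obtain ⟨q0, hq0, hr0⟩ := this
      have : qs[k] = q0 := hg (by simpa using hq0)
      rw [this]
      exact hr0

/-- No transition of the FTA at node `v` on symbol `var i` can target `x`. -/
def Escape {Q : Type} (A : FTA (Alpha op val bop) Q) (x : Q) (i : ℕ) : Prop :=
  ∀ qs q, (Alpha.var i, qs, q) ∈ A.trans → x ≠ q

/-- Weak acceptance: like `HAcceptWith`, but an edge constraint may be dropped
when the corresponding input state cannot be used by any run. -/
def WAcc {Q : Type} (H : HFTA (Alpha op val bop) Q) (T : List ℕ → Tree (Alpha op val bop))
    (ρ : List ℕ → Q) (leaf : List ℕ → ℕ → Q) : Prop :=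
  ∀ v ∈ H.nodes, ρ v ∈ (H.fta v).finals ∧ RunFrom (H.fta v) (leaf v) (T v) (ρ v) ∧
    ∀ (i : ℕ) (v' : List ℕ), (H.children v)[i]? = some v' →
      (ρ v', leaf v i) ∈ H.inter ∨ Escape (H.fta v) (leaf v i) i

/-- Structural invariants of constructed HFTAs. -/
def NodeOK (H : HFTA (Alpha op val bop) (TQ ν val)) : Prop :=
  ([] : List ℕ) ∈ H.nodes ∧
  (∀ (v : List ℕ) (j : ℕ) qs q, (Alpha.var j, qs, q) ∈ (H.fta v).trans →
    q.2.1 = SymT.var j) ∧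
  (∀ v ∈ H.nodes, ∀ (i : ℕ) (v' : List ℕ), (H.children v)[i]? = some v' → v' ∈ H.nodes)

lemma combine_fta_nil (A : FTA (Alpha op val bop) (SymT ν × val))
    (Hs : List (HFTA (Alpha op val bop) (TQ ν val))) :
    (combine A Hs).fta [] = mapFTA (fun q => (([] : List ℕ), q)) A := rfl

lemma combine_fta_cons {A : FTA (Alpha op val bop) (SymT ν × val)}
    {Hs : List (HFTA (Alpha op val bop) (TQ ν val))} {i : ℕ}
    {Hi : HFTA (Alpha op val bop) (TQ ν val)} (h : Hs[i]? = some Hi) (v : List ℕ) :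
    (combine A Hs).fta (i :: v) = mapFTA (tagState i) (Hi.fta v) := by
  simp [combine, h]

lemma combine_children_cons {A : FTA (Alpha op val bop) (SymT ν × val)}
    {Hs : List (HFTA (Alpha op val bop) (TQ ν val))} {i : ℕ}
    {Hi : HFTA (Alpha op val bop) (TQ ν val)} (h : Hs[i]? = some Hi) (v : List ℕ) :
    (combine A Hs).children (i :: v) = (Hi.children v).map (i :: ·) := by
  simp [combine, h]

lemma nodeOK_combine {A : FTA (Alpha op val bop) (SymT ν × val)}
    (hA : ∀ (j : ℕ) qs q, (Alpha.var j, qs, q) ∈ A.trans → q.1 = SymT.var j)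
    {Hs : List (HFTA (Alpha op val bop) (TQ ν val))}
    (hHs : ∀ (i : ℕ) Hi, Hs[i]? = some Hi → NodeOK Hi) :
    NodeOK (combine A Hs) := by
  refine ⟨Or.inl rfl, ?_, ?_⟩
  · intro v j qs q htr
    match v with
    | [] =>
      obtain ⟨a0, qs0, q0, htr0, heq⟩ := htr
      rw [Prod.mk.injEq, Prod.mk.injEq] at heq
      obtain ⟨rfl, -, rfl⟩ := heq
      exact hA j qs0 q0 htr0
    | i :: v' =>
      rcases h : Hs[i]? with _ | Hi
      · rw [show (combine A Hs).fta (i :: v') = emptyFTA by simp [combine, h]] at htr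
        exact absurd htr (by simp [emptyFTA])
      · rw [combine_fta_cons h] at htr
        obtain ⟨a0, qs0, q0, htr0, heq⟩ := htr
        rw [Prod.mk.injEq, Prod.mk.injEq] at heq
        obtain ⟨rfl, -, rfl⟩ := heq
        exact (hHs i Hi h).2.1 v' j qs0 q0 htr0
  · rintro v hv i v' hch
    match v with
    | [] =>
      have hch' : ((List.range Hs.length).map (fun j => [j]))[i]? = some v' := hch
      rw [List.getElem?_map] at hch'
      have hlt : i < Hs.length := by
        by_contra hin
        rw [List.getElem?_eq_none (by simpa using not_lt.mp hin)] at hch'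
        simp at hch'
      rw [List.getElem?_eq_getElem (by simpa using hlt)] at hch'
      simp at hch'
      have hsome : Hs[i]? = some Hs[i] := List.getElem?_eq_getElem hlt
      exact Or.inr ⟨i, Hs[i], [], hsome, (hHs i Hs[i] hsome).1, hch'.symm⟩
    | i0 :: v0 =>
      rcases hv with h0 | ⟨i', Hi', v'', hsome, hmem, heq⟩
      · exact absurd h0 (by simp)
      · injection heq with h1 h2
        subst h1; subst h2
        rw [combine_children_cons hsome, List.getElem?_map] at hch
        rcases h2 : (Hi'.children v0)[i]? with _ | w
        · rw [h2] at hch; simp at hch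
        · rw [h2] at hch
          simp only [Option.map_some, Option.some.injEq] at hch
          exact Or.inr ⟨i0, Hi', w, hsome, (hHs i0 Hi' hsome).2.2 v0 hmem i w h2, hch.symm⟩

/-- Runs of `buildFTA` yield grammar derivations and evaluations. -/
lemma build_run_sound {G : Grammar op ν} {sem : op → List val → val}
    (bsem : bop → val → val → val) (nsem : val → val)
    {m : ℕ} {init : ℕ → Set val} {L : ℕ → SymT ν × val}
    {t : Tree (Alpha op val bop)} {q : SymT ν × val}
    (hr : RunFrom (buildFTA bop G sem m init) L t q) :
    Derives G q.1 t ∧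
    ∀ args : ℕ → val,
      (∀ i c, i < m → c ∈ init i → L i = (SymT.var i, c) → args i = c) →
      EvalsTo sem bsem nsem args t q.2 := by
  induction hr with
  | node a ts qs q htr hvar hlen hch ih =>
    have htr' : BTrans bop G sem m init (a, qs, q) := htr
    cases htr' with
    | input i c him hic =>
      have hts : ts = [] := List.length_eq_zero_iff.mp (by simpa using hlen)
      subst hts
      have hLi : L i = (SymT.var i, c) := (hvar i rfl).symm
      constructor
      · exact Derives.var i
      · intro args hargs
        have : args i = c := hargs i c him hic hLi
        have he := EvalsTo.var (sem := sem) (bsem := bsem) (nsem := nsem) (args := args) i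
        rwa [this] at he
    | prod s o ss cs hp hl hall =>
      have hlen' : ts.length = ss.length := by
        rw [hlen, List.length_zip, hl, min_self]
      have hlencs : ts.length = cs.length := by rw [hlen', hl]
      constructor
      · refine Derives.prod s o ss ts hp hlen'.symm ?_
        intro p hpm
        obtain ⟨k, hk1, hk2, rfl⟩ := mem_zip_ex hpm
        have hk3 : k < (ss.zip cs).length := by
          simp [List.length_zip]; omega
        have := (ih (ts[k], (ss.zip cs)[k]) (zip_mem hk2 hk3)).1
        rwa [List.getElem_zip] at this
      · intro args hargs
        refine EvalsTo.dsl o ts cs hlencs ?_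
        intro p hpm
        obtain ⟨k, hk1, hk2, rfl⟩ := mem_zip_ex hpm
        have hk3 : k < (ss.zip cs).length := by
          simp [List.length_zip]; omega
        have := (ih (ts[k], (ss.zip cs)[k]) (zip_mem hk1 hk3)).2 args hargs
        rwa [List.getElem_zip] at this

/-- Every constructed HFTA satisfies the structural invariants. -/
lemma builds_nodeOK {F : Type} {gram : F → Grammar op ν} {sem : op → List val → val}
    {bsem : bop → val → val → val} {nsem : val → val} {vtrue vfalse : val}
    {ψ : GS F val bop} {H : HFTA (Alpha op val bop) (TQ ν val)}
    (hb : BuildsH gram sem bsem nsem vtrue vfalse ψ H) : NodeOK H := by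
  induction hb with
  | cst c =>
    refine nodeOK_combine ?_ (by intro i Hi h; simp at h)
    intro j qs q htr
    simp [constFTA] at htr
  | app f ts Hs hlen hall ih =>
    refine nodeOK_combine ?_ ?_
    · intro j qs q htr
      have htr' : BTrans bop (gram f) sem ts.length (initsOf Hs) (Alpha.var j, qs, q) := htr
      cases htr' with
      | input i c him hic => rfl
    · intro i Hi h
      have hi : i < Hs.length := List.getElem?_eq_some_iff.mp h |>.1
      have : Hi = Hs[i] := by
        have := List.getElem?_eq_getElem hi
        rw [h] at this; exact (Option.some.injEq _ _ ▸ this)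
      subst this
      exact ih (ts[i], Hs[i]) (zip_mem (by omega) hi)
  | bin b ψ₁ ψ₂ H₁ H₂ hb₁ hb₂ ih₁ ih₂ =>
    refine nodeOK_combine ?_ ?_
    · rintro j qs q ((⟨c, hc, heq⟩ | ⟨c, hc, heq⟩) | ⟨c₁, hc₁, c₂, hc₂, heq⟩) <;>
        rw [Prod.mk.injEq, Prod.mk.injEq] at heq
      · obtain ⟨h1, -, rfl⟩ := heq
        injection h1 with h1; rw [h1]
      · obtain ⟨h1, -, rfl⟩ := heq
        injection h1 with h1; rw [h1]
      · exact absurd heq.1 (by simp)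
    · intro i Hi h
      match i, h with
      | 0, h => injection h with h; exact h ▸ ih₁
      | 1, h => injection h with h; exact h ▸ ih₂
  | neg ψ H₁ hb₁ ih₁ =>
    refine nodeOK_combine ?_ ?_
    · rintro j qs q (⟨c, hc, heq⟩ | ⟨c, hc, heq⟩) <;>
        rw [Prod.mk.injEq, Prod.mk.injEq] at heq
      · obtain ⟨h1, -, rfl⟩ := heq
        injection h1 with h1; rw [h1]
      · exact absurd heq.1 (by simp)
    · intro i Hi h
      match i, h with
      | 0, h => injection h with h; exact h ▸ ih₁

/-- Pull back an input-state assignment through `tagState i`, defaulting to a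
junk state that escapes all variable transitions. -/
def ltag {ν val : Type} (vd : val) (i : ℕ) (x : TQ ν val) : TQ ν val :=
  if x.1.head? = some i then untag x else ([], (SymT.start, vd))

lemma ltag_spec {ν val : Type} (vd : val) (i : ℕ) {x : TQ ν val} {w : TQ ν val}
    (h : x = tagState i w) : ltag vd i x = w := by
  subst h; simp [ltag, tagState, untag]

/-- Weak acceptance restricts to the children of a `combine`. -/
lemma child_wacc {A : FTA (Alpha op val bop) (SymT ν × val)}
    {Hs : List (HFTA (Alpha op val bop) (TQ ν val))} (vd : val)
    (hHs : ∀ (j : ℕ) Hj, Hs[j]? = some Hj → NodeOK Hj)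
    {i : ℕ} {Hi : HFTA (Alpha op val bop) (TQ ν val)} (hHi : Hs[i]? = some Hi)
    {T : List ℕ → Tree (Alpha op val bop)} {ρ : List ℕ → TQ ν val}
    {leaf : List ℕ → ℕ → TQ ν val}
    (hW : WAcc (combine A Hs) T ρ leaf) :
    WAcc Hi (fun v => T (i :: v)) (fun v => untag (ρ (i :: v)))
      (fun v j => ltag vd i (leaf (i :: v) j)) := by
  intro v hv
  have hn : (i :: v) ∈ (combine A Hs).nodes := Or.inr ⟨i, Hi, v, hHi, hv, rfl⟩
  obtain ⟨hfin, hrun, hedge⟩ := hW (i :: v) hn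
  rw [combine_fta_cons hHi] at hfin hrun hedge
  obtain ⟨w, hwfin, hweq⟩ := hfin
  have hL : ∀ (j : ℕ) (x : TQ ν val), leaf (i :: v) j = tagState i x →
      ltag vd i (leaf (i :: v) j) = x := fun j x h => ltag_spec vd i h
  obtain ⟨w', hw'eq, hrun'⟩ := run_map_inv (tag_inj i) hL hrun
  have hww' : w = w' := tag_inj i (hweq.trans hw'eq)
  subst hww'
  have huntag : untag (ρ (i :: v)) = w := by rw [hw'eq, untag_tag]
  refine ⟨?_, ?_, ?_⟩
  · show untag (ρ (i :: v)) ∈ (Hi.fta v).finals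
    rw [huntag]; exact hwfin
  · show RunFrom (Hi.fta v) (fun j => ltag vd i (leaf (i :: v) j)) (T (i :: v))
      (untag (ρ (i :: v)))
    rw [huntag]; exact hrun'
  intro j v'' hj
  have hj' : ((combine A Hs).children (i :: v))[j]? = some (i :: v'') := by
    rw [combine_children_cons hHi, List.getElem?_map, hj]; rfl
  have hv'' : v'' ∈ Hi.nodes := (hHs i Hi hHi).2.2 v hv j v'' hj
  have hn'' : (i :: v'') ∈ (combine A Hs).nodes := Or.inr ⟨i, Hi, v'', hHi, hv'', rfl⟩
  obtain ⟨hfin'', -, -⟩ := hW (i :: v'') hn''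
  rw [combine_fta_cons hHi] at hfin''
  obtain ⟨w₂, hw₂fin, hw₂eq⟩ := hfin''
  rcases hedge j (i :: v'') hj' with hint | hesc
  · -- inter-FTA edge in the combined automaton
    rcases hint with ⟨i₀, H₀, q, q', hH₀, hq', heq⟩ | ⟨i₀, H₀, q, hH₀, hq, heq⟩
    · rw [Prod.mk.injEq] at heq
      obtain ⟨he1, he2⟩ := heq
      have hi0 : i₀ = i := by
        have h0 : tagState i₀ q = tagState i w₂ := by rw [← he1, ← hw₂eq]
        have h1 : i₀ :: q.1 = i :: w₂.1 := congrArg (fun x => x.1) h0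
        injection h1 with h1a h1b
      subst hi0
      have hH₀' : H₀ = Hi := by rw [hHi] at hH₀; injection hH₀ with h; exact h.symm
      have hq'' : (q, q') ∈ Hi.inter := hH₀' ▸ hq'
      left
      show (untag (ρ (i₀ :: v'')), ltag vd i₀ (leaf (i₀ :: v) j)) ∈ Hi.inter
      have e1 : untag (ρ (i₀ :: v'')) = q := by rw [he1, untag_tag]
      have e2 : ltag vd i₀ (leaf (i₀ :: v) j) = q' := ltag_spec vd i₀ he2
      rw [e1, e2]; exact hq''
    · -- edge into the root's input states: the child cannot use it
      rw [Prod.mk.injEq] at heq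
      obtain ⟨-, he2⟩ := heq
      right
      intro qs q0 htr0 hne
      have hne' : ltag vd i (leaf (i :: v) j) = q0 := hne
      have hq01 : q0.2.1 = SymT.var j := (hHs i Hi hHi).2.1 v j qs q0 htr0
      have hl0 : ltag vd i (leaf (i :: v) j) = (([] : List ℕ), (SymT.start, vd)) := by
        rw [he2]; simp [ltag]
      rw [hl0] at hne'
      rw [← hne'] at hq01
      simp at hq01
  · -- escape in the combined automaton
    right
    intro qs q0 htr0 hne
    have hne' : ltag vd i (leaf (i :: v) j) = q0 := hne
    by_cases hhd : (leaf (i :: v) j).1.head? = some i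
    · have hform : leaf (i :: v) j = tagState i (untag (leaf (i :: v) j)) :=
        (tag_of_head hhd).symm
      have hl0 : ltag vd i (leaf (i :: v) j) = untag (leaf (i :: v) j) := by
        simp [ltag, hhd]
      rw [hl0] at hne'
      have hmem : (Alpha.var j, qs.map (tagState i), tagState i q0) ∈
          (mapFTA (tagState i) (Hi.fta v)).trans := ⟨Alpha.var j, qs, q0, htr0, rfl⟩
      exact hesc (qs.map (tagState i)) (tagState i q0) hmem (by rw [hform, ← hne'])
    · have hq01 : q0.2.1 = SymT.var j := (hHs i Hi hHi).2.1 v j qs q0 htr0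
      have hl0 : ltag vd i (leaf (i :: v) j) = (([] : List ℕ), (SymT.start, vd)) := by
        simp [ltag, hhd]
      rw [hl0] at hne'
      rw [← hne'] at hq01
      simp at hq01

/-- The value fed into input `xᵢ` of the root FTA equals the value of the run
on the i-th child. -/
lemma root_link {A : FTA (Alpha op val bop) (SymT ν × val)}
    {Hs : List (HFTA (Alpha op val bop) (TQ ν val))}
    (hHs : ∀ (j : ℕ) Hj, Hs[j]? = some Hj → NodeOK Hj)
    {T : List ℕ → Tree (Alpha op val bop)} {ρ : List ℕ → TQ ν val}
    {leaf : List ℕ → ℕ → TQ ν val}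
    (hW : WAcc (combine A Hs) T ρ leaf)
    {i : ℕ} {Hi : HFTA (Alpha op val bop) (TQ ν val)} (hHi : Hs[i]? = some Hi)
    {c : val} (hleaf : leaf [] i = (([] : List ℕ), (SymT.var i, c)))
    (htr : ∃ qs, (Alpha.var i, qs, (SymT.var i, c)) ∈ A.trans) :
    c = (ρ [i]).2.2 := by
  obtain ⟨-, -, hedge⟩ := hW [] (Or.inl rfl)
  have hi : i < Hs.length := List.getElem?_eq_some_iff.mp hHi |>.1
  have hch : ((combine A Hs).children [])[i]? = some [i] := by
    show ((List.range Hs.length).map (fun j => [j]))[i]? = some [i]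
    rw [List.getElem?_map, List.getElem?_eq_getElem (by simpa using hi)]
    simp
  rcases hedge i [i] hch with hint | hesc
  · rcases hint with ⟨i₀, H₀, q, q', hH₀, hq', heq⟩ | ⟨i₀, H₀, q, hH₀, hq, heq⟩
    · rw [Prod.mk.injEq] at heq
      exfalso
      have h2 := heq.2
      rw [hleaf] at h2
      have : ([] : List ℕ) = i₀ :: q'.1 := congrArg (fun x => x.1) h2
      simp at this
    · rw [Prod.mk.injEq] at heq
      obtain ⟨he1, he2⟩ := heq
      have hc : c = q.2.2 := by
        rw [hleaf] at he2
        have := congrArg (fun x => x.2.2) he2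
        simpa using this
      rw [hc, he1]
      rfl
  · exfalso
    obtain ⟨qs, htr0⟩ := htr
    have hmem : (Alpha.var i, qs.map (fun q => (([] : List ℕ), q)),
        (([] : List ℕ), (SymT.var i, c))) ∈
        ((combine A Hs).fta []).trans := ⟨Alpha.var i, qs, _, htr0, rfl⟩
    exact hesc _ _ hmem hleaf

/-- Pull back a root input-state assignment through `fun q => ([], q)`. -/
def rootPull {ν val : Type} (vd : val) (x : TQ ν val) : SymT ν × val :=
  if x.1 = [] then x.2 else (SymT.start, vd)

lemma rootPull_pull {ν val : Type} (vd : val) (y : TQ ν val) :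
    ∀ x : SymT ν × val, y = (([] : List ℕ), x) → rootPull vd y = x := by
  rintro x rfl; simp [rootPull]

lemma rootPull_eq {ν val : Type} {vd : val} {x : TQ ν val} {j : ℕ} {c : val}
    (h : rootPull vd x = (SymT.var j, c)) : x = (([] : List ℕ), (SymT.var j, c)) := by
  unfold rootPull at h
  by_cases h1 : x.1 = []
  · rw [if_pos h1] at h; exact Prod.ext h1 h
  · rw [if_neg h1] at h; exact absurd h (by simp)

lemma nil_tag_inj {ν val : Type} :
    Function.Injective (fun q : SymT ν × val => (([] : List ℕ), q)) := by
  intro a b h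
  exact congrArg Prod.snd h

/-- Main induction: weak acceptance of a constructed HFTA yields conformance
and correct evaluation. -/
lemma key_sound {F : Type} [Inhabited val] {gram : F → Grammar op ν}
    {sem : op → List val → val} {bsem : bop → val → val → val} {nsem : val → val}
    {vtrue vfalse : val} {ψ : GS F val bop} {H : HFTA (Alpha op val bop) (TQ ν val)}
    (hb : BuildsH gram sem bsem nsem vtrue vfalse ψ H) :
    ∀ (T : List ℕ → Tree (Alpha op val bop)) (ρ : List ℕ → TQ ν val)
      (leaf : List ℕ → ℕ → TQ ν val), WAcc H T ρ leaf →
      (∀ (f : F) (p : List ℕ), OccursAt ψ f p → ConformsTo (gram f) (T p)) ∧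
      (∀ I : F → Tree (Alpha op val bop),
        (∀ (f : F) (p : List ℕ), OccursAt ψ f p → I f = T p) →
        SpecEval sem bsem nsem I ψ ((ρ []).2.2)) := by
  induction hb with
  | cst c =>
    intro T ρ leaf hW
    obtain ⟨hfin, -, -⟩ := hW [] (Or.inl rfl)
    obtain ⟨w, hwfin, hweq⟩ := hfin
    have hw : w = (SymT.start, c) := hwfin
    refine ⟨?_, ?_⟩
    · intro f p hocc; cases hocc
    · intro I hI
      have hv : (ρ []).2.2 = c := by rw [← hweq, hw]
      rw [hv]
      exact SpecEval.cst c
  | app f ts Hs hlen hall ih =>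
    intro T ρ leaf hW
    have hHs : ∀ (j : ℕ) Hj, Hs[j]? = some Hj → NodeOK Hj := by
      intro j Hj h
      have hj : j < Hs.length := List.getElem?_eq_some_iff.mp h |>.1
      have hHj : Hj = Hs[j] := by
        rw [List.getElem?_eq_getElem hj] at h
        injection h with h; exact h.symm
      subst hHj
      exact builds_nodeOK (hall (ts[j], Hs[j]) (zip_mem (by omega) hj))
    obtain ⟨hfin, hrun, hedge⟩ := hW [] (Or.inl rfl)
    have hfin' : ρ [] ∈ (mapFTA (fun q => (([] : List ℕ), q))
        (buildFTA bop (gram f) sem ts.length (initsOf Hs))).finals := hfin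
    obtain ⟨w, hwfin, hweq⟩ := hfin'
    have hrun' : RunFrom (mapFTA (fun q => (([] : List ℕ), q))
        (buildFTA bop (gram f) sem ts.length (initsOf Hs)))
        (leaf []) (T []) (ρ []) := hrun
    obtain ⟨w', hw'eq, hrunB⟩ := run_map_inv nil_tag_inj
      (fun j x h => rootPull_pull vfalse (leaf [] j) x h) hrun'
    have hww : w = w' := nil_tag_inj (hweq.trans hw'eq)
    subst hww
    obtain ⟨hder, heval⟩ := build_run_sound bsem nsem hrunB
    have hw1 : w.1 = SymT.nt (gram f).start := hwfin.2
    refine ⟨?_, ?_⟩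
    · intro f' p hocc
      cases hocc with
      | here =>
        rw [hw1] at hder
        exact hder
      | app _ _ _ k t0 p0 htk hocc' =>
        have hk : k < ts.length := List.getElem?_eq_some_iff.mp htk |>.1
        have ht0 : t0 = ts[k] := by
          rw [List.getElem?_eq_getElem hk] at htk
          injection htk with h; exact h.symm
        subst ht0
        have hk' : k < Hs.length := by omega
        have hsome : Hs[k]? = some Hs[k] := List.getElem?_eq_getElem hk'
        exact (ih (ts[k], Hs[k]) (zip_mem hk hk') _ _ _
          (child_wacc vfalse hHs hsome hW)).1 f' p0 hocc'
    · intro I hI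
      have hval : (ρ []).2.2 = w.2 := by rw [← hweq]
      rw [hval]
      refine SpecEval.app f ts ((List.range ts.length).map (fun j => (ρ [j]).2.2)) w.2
        (by simp) ?_ ?_
      · intro p hp
        obtain ⟨k, hk1, hk2, rfl⟩ := mem_zip_ex hp
        have hk' : k < Hs.length := by omega
        have hsome : Hs[k]? = some Hs[k] := List.getElem?_eq_getElem hk'
        have hIk : ∀ (f' : F) (p' : List ℕ), OccursAt ts[k] f' p' → I f' = T (k :: p') := by
          intro f' p' ho
          exact hI f' (k :: p')
            (OccursAt.app f f' ts k ts[k] p' (List.getElem?_eq_getElem hk1) ho)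
        have hse := (ih (ts[k], Hs[k]) (zip_mem hk1 hk') _ _ _
          (child_wacc vfalse hHs hsome hW)).2 I hIk
        have hcsk : ((List.range ts.length).map (fun j => (ρ [j]).2.2))[k] =
            (ρ [k]).2.2 := by simp
        show SpecEval sem bsem nsem I ts[k] _
        rw [hcsk]
        exact hse
      · have hIf : I f = T [] := hI f [] (OccursAt.here f ts)
        rw [hIf]
        refine heval (fun j => ((List.range ts.length).map (fun j => (ρ [j]).2.2)).getD j default) ?_
        intro j c hj hc hLj
        have hleafj : leaf [] j = (([] : List ℕ), (SymT.var j, c)) := rootPull_eq hLj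
        have hj' : j < Hs.length := by omega
        have hsome : Hs[j]? = some Hs[j] := List.getElem?_eq_getElem hj'
        have htrj : (Alpha.var j, ([] : List (SymT ν × val)), (SymT.var j, c)) ∈
            (buildFTA bop (gram f) sem ts.length (initsOf Hs)).trans :=
          BTrans.input j c hj hc
        have hcj := root_link hHs hW hsome hleafj ⟨[], htrj⟩
        have hjlen : j < ((List.range ts.length).map (fun j => (ρ [j]).2.2)).length := by
          simpa using hj
        show ((List.range ts.length).map (fun j => (ρ [j]).2.2)).getD j default = c
        rw [List.getD_eq_getElem _ _ hjlen]
        simp only [List.getElem_map, List.getElem_range]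
        exact hcj.symm
  | bin b ψ₁ ψ₂ H₁ H₂ hb₁ hb₂ ih₁ ih₂ =>
    intro T ρ leaf hW
    have hHs : ∀ (j : ℕ) Hj, ([H₁, H₂] :
        List (HFTA (Alpha op val bop) (TQ ν val)))[j]? = some Hj → NodeOK Hj := by
      intro j Hj h
      match j, h with
      | 0, h => injection h with h; exact h ▸ builds_nodeOK hb₁
      | 1, h => injection h with h; exact h ▸ builds_nodeOK hb₂
    obtain ⟨hfin, hrun, -⟩ := hW [] (Or.inl rfl)
    have hfin' : ρ [] ∈ (mapFTA (fun q => (([] : List ℕ), q))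
        (logicFTA (op := op) (ν := ν) vtrue vfalse bsem b (rootVals H₁) (rootVals H₂))).finals :=
      hfin
    obtain ⟨w, hwfin, hweq⟩ := hfin'
    have hrun' : RunFrom (mapFTA (fun q => (([] : List ℕ), q))
        (logicFTA (op := op) (ν := ν) vtrue vfalse bsem b (rootVals H₁) (rootVals H₂)))
        (leaf []) (T []) (ρ []) := hrun
    obtain ⟨w', hw'eq, hrunB⟩ := run_map_inv nil_tag_inj
      (fun j x h => rootPull_pull vfalse (leaf [] j) x h) hrun'
    have hww : w = w' := nil_tag_inj (hweq.trans hw'eq)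
    subst hww
    have hw1 : w.1 = SymT.start := by
      rcases hwfin with h | h <;> rw [h]
    have hsome0 : ([H₁, H₂] : List (HFTA (Alpha op val bop) (TQ ν val)))[0]? = some H₁ := rfl
    have hsome1 : ([H₁, H₂] : List (HFTA (Alpha op val bop) (TQ ν val)))[1]? = some H₂ := rfl
    refine ⟨?_, ?_⟩
    · intro f' p hocc
      cases hocc with
      | binl _ _ _ _ p0 hocc' =>
        exact (ih₁ _ _ _ (child_wacc vfalse hHs hsome0 hW)).1 f' p0 hocc'
      | binr _ _ _ _ p0 hocc' =>
        exact (ih₂ _ _ _ (child_wacc vfalse hHs hsome1 hW)).1 f' p0 hocc'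
    · intro I hI
      obtain ⟨t0, hT⟩ : ∃ t0, T [] = t0 := ⟨T [], rfl⟩
      rw [hT] at hrunB
      cases hrunB with
      | node a ts0 qs q htr hvar hlen0 hch =>
        rcases htr with (⟨c, hc, heq⟩ | ⟨c, hc, heq⟩) | ⟨c₁, hc₁, c₂, hc₂, heq⟩
        · exfalso
          rw [Prod.mk.injEq, Prod.mk.injEq] at heq
          have := heq.2.2
          rw [this] at hw1
          simp at hw1
        · exfalso
          rw [Prod.mk.injEq, Prod.mk.injEq] at heq
          have := heq.2.2
          rw [this] at hw1
          simp at hw1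
        · rw [Prod.mk.injEq, Prod.mk.injEq] at heq
          obtain ⟨rfl, rfl, hweq2⟩ := heq
          obtain ⟨t₁, t₂, rfl⟩ := List.length_eq_two.mp (by simpa using hlen0)
          have r₁ := hch (t₁, (SymT.var 0, c₁)) (by simp)
          have r₂ := hch (t₂, (SymT.var 1, c₂)) (by simp)
          -- analyze the run on t₁
          have hL0 : rootPull vfalse (leaf [] 0) = (SymT.var 0, c₁) := by
            cases r₁ with
            | node a₁ ts₁ qs₁ q₁ htr₁ hvar₁ hlen₁ hch₁ =>
              rcases htr₁ with (⟨c, hc, heq₁⟩ | ⟨c, hc, heq₁⟩) | ⟨d₁, hd₁, d₂, hd₂, heq₁⟩ <;>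
                rw [Prod.mk.injEq, Prod.mk.injEq] at heq₁
              · obtain ⟨ha₁, -, -⟩ := heq₁
                exact (hvar₁ 0 ha₁).symm
              · exact absurd heq₁.2.2 (by simp)
              · exact absurd heq₁.2.2 (by simp)
          have hL1 : rootPull vfalse (leaf [] 1) = (SymT.var 1, c₂) := by
            cases r₂ with
            | node a₂ ts₂ qs₂ q₂ htr₂ hvar₂ hlen₂ hch₂ =>
              rcases htr₂ with (⟨c, hc, heq₂⟩ | ⟨c, hc, heq₂⟩) | ⟨d₁, hd₁, d₂, hd₂, heq₂⟩ <;>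
                rw [Prod.mk.injEq, Prod.mk.injEq] at heq₂
              · exact absurd heq₂.2.2 (by simp)
              · obtain ⟨ha₂, -, -⟩ := heq₂
                exact (hvar₂ 1 ha₂).symm
              · exact absurd heq₂.2.2 (by simp)
          have hc1v := root_link hHs hW hsome0 (rootPull_eq hL0)
            ⟨[], Or.inl (Or.inl ⟨c₁, hc₁, rfl⟩)⟩
          have hc2v := root_link hHs hW hsome1 (rootPull_eq hL1)
            ⟨[], Or.inl (Or.inr ⟨c₂, hc₂, rfl⟩)⟩
          have hse₁ := (ih₁ _ _ _ (child_wacc vfalse hHs hsome0 hW)).2 I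
            (fun f' p' ho => hI f' (0 :: p') (OccursAt.binl b ψ₁ ψ₂ f' p' ho))
          have hse₂ := (ih₂ _ _ _ (child_wacc vfalse hHs hsome1 hW)).2 I
            (fun f' p' ho => hI f' (1 :: p') (OccursAt.binr b ψ₁ ψ₂ f' p' ho))
          have hval : (ρ []).2.2 = bsem b c₁ c₂ := by
            rw [← hweq, hweq2]
          rw [hval]
          have hse₁' : SpecEval sem bsem nsem I ψ₁ c₁ := by
            rw [hc1v]; exact hse₁
          have hse₂' : SpecEval sem bsem nsem I ψ₂ c₂ := by
            rw [hc2v]; exact hse₂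
          exact SpecEval.bin b ψ₁ ψ₂ c₁ c₂ hse₁' hse₂'
  | neg ψ H₁ hb₁ ih₁ =>
    intro T ρ leaf hW
    have hHs : ∀ (j : ℕ) Hj, ([H₁] :
        List (HFTA (Alpha op val bop) (TQ ν val)))[j]? = some Hj → NodeOK Hj := by
      intro j Hj h
      match j, h with
      | 0, h => injection h with h; exact h ▸ builds_nodeOK hb₁
    obtain ⟨hfin, hrun, -⟩ := hW [] (Or.inl rfl)
    have hfin' : ρ [] ∈ (mapFTA (fun q => (([] : List ℕ), q))
        (negFTA (op := op) (bop := bop) (ν := ν) vtrue vfalse nsem (rootVals H₁))).finals := hfin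
    obtain ⟨w, hwfin, hweq⟩ := hfin'
    have hrun' : RunFrom (mapFTA (fun q => (([] : List ℕ), q))
        (negFTA (op := op) (bop := bop) (ν := ν) vtrue vfalse nsem (rootVals H₁)))
        (leaf []) (T []) (ρ []) := hrun
    obtain ⟨w', hw'eq, hrunB⟩ := run_map_inv nil_tag_inj
      (fun j x h => rootPull_pull vfalse (leaf [] j) x h) hrun'
    have hww : w = w' := nil_tag_inj (hweq.trans hw'eq)
    subst hww
    have hw1 : w.1 = SymT.start := by
      rcases hwfin with h | h <;> rw [h]
    have hsome0 : ([H₁] : List (HFTA (Alpha op val bop) (TQ ν val)))[0]? = some H₁ := rfl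
    refine ⟨?_, ?_⟩
    · intro f' p hocc
      cases hocc with
      | neg _ _ p0 hocc' =>
        exact (ih₁ _ _ _ (child_wacc vfalse hHs hsome0 hW)).1 f' p0 hocc'
    · intro I hI
      obtain ⟨t0, hT⟩ : ∃ t0, T [] = t0 := ⟨T [], rfl⟩
      rw [hT] at hrunB
      cases hrunB with
      | node a ts0 qs q htr hvar hlen0 hch =>
        rcases htr with ⟨c, hc, heq⟩ | ⟨c, hc, heq⟩
        · exfalso
          rw [Prod.mk.injEq, Prod.mk.injEq] at heq
          have := heq.2.2
          rw [this] at hw1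
          simp at hw1
        · rw [Prod.mk.injEq, Prod.mk.injEq] at heq
          obtain ⟨rfl, rfl, hweq2⟩ := heq
          obtain ⟨t₁, rfl⟩ := List.length_eq_one_iff.mp (by simpa using hlen0)
          have r₁ := hch (t₁, (SymT.var 0, c)) (by simp)
          have hL0 : rootPull vfalse (leaf [] 0) = (SymT.var 0, c) := by
            cases r₁ with
            | node a₁ ts₁ qs₁ q₁ htr₁ hvar₁ hlen₁ hch₁ =>
              rcases htr₁ with ⟨d, hd, heq₁⟩ | ⟨d, hd, heq₁⟩ <;>
                rw [Prod.mk.injEq, Prod.mk.injEq] at heq₁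
              · obtain ⟨ha₁, -, -⟩ := heq₁
                exact (hvar₁ 0 ha₁).symm
              · exact absurd heq₁.2.2 (by simp)
          have hc1v := root_link hHs hW hsome0 (rootPull_eq hL0)
            ⟨[], Or.inl ⟨c, hc, rfl⟩⟩
          have hse₁ := (ih₁ _ _ _ (child_wacc vfalse hHs hsome0 hW)).2 I
            (fun f' p' ho => hI f' (0 :: p') (OccursAt.neg ψ f' p' ho))
          have hval : (ρ []).2.2 = nsem c := by
            rw [← hweq, hweq2]
          rw [hval]
          have hse₁' : SpecEval sem bsem nsem I ψ c := by
            rw [hc1v]; exact hse₁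
          exact SpecEval.neg ψ c hse₁'

end Sound

/-- HFTA Soundness (Theorem 4.1). -/
theorem hfta_soundness
    {op val bop ν F F₀ : Type} [Inhabited val]
    (G : F₀ → Grammar op ν) (Minv : F → F₀)
    (sem : op → List val → val) (bsem : bop → val → val → val) (nsem : val → val)
    (vtrue vfalse : val)
    (Φ : GS F val bop) (H' H : HFTA (Alpha op val bop) (TQ ν val))
    (hform : IsForm Φ) (honce : OccursOnce Φ)
    (hbuild : BuildsH (fun f => G (Minv f)) sem bsem nsem vtrue vfalse Φ H')
    (hfinal : H = finalize vtrue H')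
    (T : List ℕ → Tree (Alpha op val bop))
    (hacc : HAccepts H T) :
    (∀ (f : F) (p : List ℕ), OccursAt Φ f p → ConformsTo (G (Minv f)) (T p)) ∧
    (∀ I : F → Tree (Alpha op val bop),
        (∀ (f : F) (p : List ℕ), OccursAt Φ f p → I f = T p) →
        Satisfies sem bsem nsem vtrue I Φ) := by
  obtain ⟨ρ, leaf, hA⟩ := hacc
  subst hfinal
  have hNO := builds_nodeOK hbuild
  have hnode : ([] : List ℕ) ∈ H'.nodes := hNO.1
  have hA0 := hA [] hnode
  have hρtrue : (ρ []).2 = (SymT.start, vtrue) := by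
    have h1 := hA0.1
    have h2 : ρ [] ∈ {q : TQ ν val | q ∈ (H'.fta []).finals ∧ q.2 = (SymT.start, vtrue)} := by
      simpa [finalize] using h1
    exact h2.2
  have hW : WAcc H' T ρ leaf := by
    intro v hv
    obtain ⟨h1, h2, h3⟩ := hA v hv
    by_cases hv0 : v = []
    · subst hv0
      refine ⟨?_, ?_, ?_⟩
      · have h4 : ρ [] ∈ {q : TQ ν val | q ∈ (H'.fta []).finals ∧
            q.2 = (SymT.start, vtrue)} := by
          simpa [finalize] using h1
        exact h4.1
      · refine run_congr ?_ h2
        simp [finalize]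
      · intro i v' hch
        exact Or.inl (h3 i v' hch)
    · refine ⟨?_, ?_, ?_⟩
      · simpa [finalize, hv0] using h1
      · refine run_congr ?_ h2
        simp [finalize, hv0]
      · intro i v' hch
        exact Or.inl (h3 i v' hch)
  have hkey := key_sound hbuild T ρ leaf hW
  refine ⟨hkey.1, ?_⟩
  intro I hI
  have hse := hkey.2 I hI
  unfold Satisfies
  have hv2 : (ρ []).2.2 = vtrue := by rw [hρtrue]
  rwa [hv2] at hse

end Relish
end

section
/- Soundness of BuildFTA (Lemma A.1): Suppose the FTA A = (Q, Σ, Q_f, Δ) is built by BuildFTA with grammar G and initial state sets [Q_1,…,Q_m]. Then for every tree t(x_1,…,x_m) that is accepted by A: (1) t conforms to grammar G; and (2) for any values c_1,…,c_m with q_{s_i}^{c_i} ∈ Q_i for each i, the accepting run of A on t with each leaf x_i assigned state q_{x_i}^{c_i} labels the root of t with a final state q_s^c where c = ⟦t(c_1,…,c_m)⟧, i.e. c is the value obtained by evaluating t with x_i = c_i under the DSL semantics. -/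
namespace Relish

theorem runFrom_derives {op val bop ν : Type}
    (G : Grammar op ν) (sem : op → List val → val)
    (arity : ℕ) (init : ℕ → Set val)
    (leaf : ℕ → SymT ν × val) {t : Tree (Alpha op val bop)} {q : SymT ν × val}
    (h : RunFrom (buildFTA bop G sem arity init) leaf t q) : Derives G q.1 t := by
  induction h with
  | node a ts qs q htr hleaf hlen hruns ih =>
    cases htr with
    | input i c hi hc =>
      have hts : ts = [] := List.length_eq_zero_iff.mp (by simpa using hlen)
      subst hts
      exact Derives.var i
    | prod s o ss cs hp hlen' hst =>
      have hq : (ss.zip cs).length = ss.length := by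
        simp [List.length_zip, hlen']
      have hlen2 : ss.length = ts.length := by omega
      refine Derives.prod s o ss ts hp hlen2 ?_
      intro p hp'
      obtain ⟨i, hi, hpi⟩ := List.mem_iff_getElem.mp hp'
      have hi1 : i < ss.length := by simp [List.length_zip] at hi; omega
      have hi2 : i < ts.length := by omega
      have hi3 : i < cs.length := by omega
      have hmem : (ts[i], (ss.zip cs)[i]) ∈ ts.zip (ss.zip cs) := by
        refine List.mem_iff_getElem.mpr ⟨i, ?_, ?_⟩ <;>
          simp [List.length_zip, hi2, hi1, hi3]
      have := ih _ hmem
      simp only [List.getElem_zip] at this hpi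
      subst hpi
      simpa using this

theorem runFrom_evals {op val bop ν : Type}
    (G : Grammar op ν) (sem : op → List val → val)
    (bsem : bop → val → val → val) (nsem : val → val)
    (arity : ℕ) (init : ℕ → Set val) (args : ℕ → val)
    {t : Tree (Alpha op val bop)} {q : SymT ν × val}
    (h : RunFrom (buildFTA bop G sem arity init)
        (fun i => (SymT.var i, args i)) t q) :
    EvalsTo sem bsem nsem args t q.2 := by
  induction h with
  | node a ts qs q htr hleaf hlen hruns ih =>
    cases htr with
    | input i c hi hc =>
      have hts : ts = [] := List.length_eq_zero_iff.mp (by simpa using hlen)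
      subst hts
      have := hleaf i rfl
      have hc2 : c = args i := congrArg Prod.snd this
      subst hc2
      exact EvalsTo.var i
    | prod s o ss cs hp hlen' hst =>
      have hq : (ss.zip cs).length = ss.length := by
        simp [List.length_zip, hlen']
      have hlen2 : ts.length = cs.length := by omega
      refine EvalsTo.dsl o ts cs hlen2 ?_
      intro p hp'
      obtain ⟨i, hi, hpi⟩ := List.mem_iff_getElem.mp hp'
      have hi2 : i < ts.length := by simp [List.length_zip] at hi; omega
      have hi1 : i < ss.length := by omega
      have hi3 : i < cs.length := by omega
      have hmem : (ts[i], (ss.zip cs)[i]) ∈ ts.zip (ss.zip cs) := by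
        refine List.mem_iff_getElem.mpr ⟨i, ?_, ?_⟩ <;>
          simp [List.length_zip, hi2, hi1, hi3]
      have := ih _ hmem
      simp only [List.getElem_zip] at this hpi
      subst hpi
      simpa using this

/-- Soundness of BuildFTA (Lemma A.1). -/
theorem buildFTA_sound
    {op val bop ν : Type}
    (G : Grammar op ν) (sem : op → List val → val)
    (bsem : bop → val → val → val) (nsem : val → val)
    (arity : ℕ) (init : ℕ → Set val)
    (t : Tree (Alpha op val bop))
    (hacc : ∃ (leaf : ℕ → SymT ν × val) (q : SymT ν × val),
        q ∈ (buildFTA bop G sem arity init).finals ∧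
        RunFrom (buildFTA bop G sem arity init) leaf t q) :
    ConformsTo G t ∧
    ∀ (args : ℕ → val), (∀ i, i < arity → args i ∈ init i) →
      ∀ q : SymT ν × val,
        RunFrom (buildFTA bop G sem arity init) (fun i => (SymT.var i, args i)) t q →
        q ∈ (buildFTA bop G sem arity init).finals →
        ∃ c : val, q = (SymT.nt G.start, c) ∧ EvalsTo sem bsem nsem args t c := by
  constructor
  · obtain ⟨leaf, q, hqf, hrun⟩ := hacc
    have hd := runFrom_derives G sem arity init leaf hrun
    have hq1 : q.1 = SymT.nt G.start := hqf.2
    rw [hq1] at hd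
    exact hd
  · intro args _ q hrun hqf
    refine ⟨q.2, ?_, runFrom_evals G sem bsem nsem arity init args hrun⟩
    have hq1 : q.1 = SymT.nt G.start := hqf.2
    exact Prod.ext hq1 rfl

end Relish
end

section
/- Run-value correspondence for BuildFTA (strengthened claim in the proof of Lemma A.1): Suppose the FTA A = (Q, Σ, Q_f, Δ) is built by BuildFTA with grammar G and initial state sets [Q_1,…,Q_m]. Then for every term t(x_1,…,x_m) on which A has a run starting from leaf states q_{x_i}^{c_i} (with q_{s_i}^{c_i} ∈ Q_i), the run labels the root of t with a state q_s^c satisfying c = ⟦t(c_1,…,c_m)⟧, i.e. the state reached at the root records exactly the value of t evaluated on the inputs c_1,…,c_m under the DSL semantics. This holds by induction on the height of t, whether or not q_s^c is a final state. -/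
namespace Relish

/-- Run-value correspondence for BuildFTA. -/
theorem buildFTA_run_value
    {op val bop ν : Type}
    (G : Grammar op ν) (sem : op → List val → val)
    (bsem : bop → val → val → val) (nsem : val → val)
    (arity : ℕ) (init : ℕ → Set val)
    (args : ℕ → val) (hargs : ∀ i, i < arity → args i ∈ init i)
    (t : Tree (Alpha op val bop)) (q : SymT ν × val)
    (hrun : RunFrom (buildFTA bop G sem arity init) (fun i => (SymT.var i, args i)) t q) :
    EvalsTo sem bsem nsem args t q.2 := by
  induction hrun with
  | node a ts qs q htr hvar hlen hrec ih =>
    cases htr with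
    | input i c hi hc =>
      have hc2 : c = args i := congrArg Prod.snd (hvar i rfl)
      have hts : ts = [] := List.length_eq_zero_iff.mp hlen
      subst hts; subst hc2
      exact EvalsTo.var i
    | prod s o ss cs hp hsc hst =>
      have hlen' : ts.length = cs.length := by
        simpa [List.length_zip, hsc] using hlen
      refine EvalsTo.dsl o ts cs hlen' ?_
      intro p hp'
      rw [List.mem_iff_getElem] at hp'
      obtain ⟨j, hj, hpj⟩ := hp'
      have hj1 : j < ts.length := by
        simp [List.length_zip] at hj; omega
      have hj2 : j < cs.length := by rw [← hlen']; exact hj1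
      have hj3 : j < ss.length := by rw [hsc]; exact hj2
      have hmem : (ts[j], ((ss.zip cs)[j]'(by simp [List.length_zip]; omega)))
          ∈ ts.zip (ss.zip cs) := by
        rw [List.mem_iff_getElem]
        exact ⟨j, by simp [List.length_zip]; omega, by simp⟩
      have := ih _ hmem
      simp only [List.getElem_zip] at this hpj
      rw [← hpj]
      simpa using this

end Relish
end
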